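/- arXiv:2304.01661 — 5 statements merged into one kernel-verified Lean document; each statement's English description precedes it below -/
import Mathlib

section
/- Let Q, K, M be positive integers, let H_q ∈ ℂ^{K×M} for q = 0,…,Q−1, and let B ∈ ℂ^{K×K} be a diagonal matrix with positive real diagonal entries. Suppose p ∈ ℝ^M has all entries p_m > 0, that for each q the K×K matrix H_q D_p^{1/2} H_q^H is invertible, and that p satisfies the fixed-point equations p_m = Σ_{k=0}^{K−1} Σ_{q=0}^{Q−1} |[D_p^{1/2} H_q^H (H_q D_p^{1/2} H_q^H)^{−1} B]_{m,k}|² for every m. Then the matrices W_q = D_p^{1/2} H_q^H (H_q D_p^{1/2} H_q^H)^{−1} B satisfy H_q W_q = B for all q, and for every family of matrices V_q ∈ ℂ^{M×K} with H_q V_q = B for all q one has Σ_{m=0}^{M−1} (Σ_{k=0}^{K−1} Σ_{q=0}^{Q−1} |[V_q]_{m,k}|²)^{1/2} ≥ Σ_{m=0}^{M−1} p_m^{1/2}; in particular, the family (W_q)_q globally minimizes the objective Σ_m (Σ_{k,q} |[W_q]_{m,k}|²)^{1/2} subject to the zero-forcing constraints H_q W_q = B for all q. -/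
open Matrix

/-!
With weights `c_m = p_m^{-1/2}`, so that `D_p^{1/2} diag(c) = 1`, one has
`W_qᴴ diag(c) = (A_q⁻¹ B)ᴴ H_q` where `A_q = H_q D_p^{1/2} H_qᴴ`. Hence
`∑_q tr (W_qᴴ diag(c) V_q) = ∑_q tr ((A_q⁻¹ B)ᴴ B)` is the same for every zero-forcing family `V`.
Row by row this quantity is `∑_m c_m ⟨W_{m,·}, V_{m,·}⟩`: for `V = W` the fixed-point equations
turn it into `∑_m √p_m`, and for general `V` Cauchy–Schwarz bounds its real part by
`∑_m √(∑_{k,q} |[V_q]_{m,k}|²)`.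
-/

namespace Matrix

variable {α : Type*} {ι κ : Type*} [Fintype ι] [Fintype κ]

theorem mul_mul_nonsing_inv_mul_cancel [DecidableEq κ] [CommRing α] (H : Matrix κ ι α)
    (X : Matrix ι κ α) (B : Matrix κ κ α) (h : IsUnit (H * X)) :
    H * (X * (H * X)⁻¹ * B) = B := by
  rw [← Matrix.mul_assoc, ← Matrix.mul_assoc,
    mul_nonsing_inv _ ((isUnit_iff_isUnit_det _).mp h), Matrix.one_mul]

theorem conjTranspose_mul_mul_eq_of_mul_eq [DecidableEq ι] [CommSemiring α] [StarRing α]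
    {H : Matrix κ ι α} {D E : Matrix ι ι α} (hD : Dᴴ = D) (hDE : D * E = 1)
    (X : Matrix κ κ α) {B : Matrix κ κ α} {V : Matrix ι κ α} (hV : H * V = B) :
    (D * Hᴴ * X)ᴴ * E * V = Xᴴ * B := by
  simp only [conjTranspose_mul, conjTranspose_conjTranspose, hD, Matrix.mul_assoc, hDE,
    Matrix.one_mul, ← hV]

theorem trace_conjTranspose_mul_diagonal_mul [DecidableEq ι] [CommSemiring α] [StarRing α]
    (W V : Matrix ι κ α) (e : ι → α) :
    trace (Wᴴ * diagonal e * V) = ∑ m, e m * ∑ k, star (W m k) * V m k := by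
  simp only [trace, diag, mul_apply (M := Wᴴ * diagonal e), mul_diagonal, conjTranspose_apply,
    Finset.mul_sum]
  rw [Finset.sum_comm]
  exact Finset.sum_congr rfl fun _ _ => Finset.sum_congr rfl fun _ _ => by ring

end Matrix

section Precoding

variable {𝕜 : Type*} [RCLike 𝕜] {σ ι κ : Type*} [Fintype σ] [Fintype κ]

def antennaPower (V : σ → Matrix ι κ 𝕜) (m : ι) : ℝ :=
  ∑ k, ∑ q, ‖V q m k‖ ^ 2

def rowInner (W V : σ → Matrix ι κ 𝕜) (m : ι) : 𝕜 :=
  ∑ k, ∑ q, star (W q m k) * V q m k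

theorem rowInner_self (W : σ → Matrix ι κ 𝕜) (m : ι) :
    rowInner W W m = (antennaPower W m : 𝕜) := by
  simp only [rowInner, antennaPower, RCLike.ofReal_sum, RCLike.ofReal_pow,
    RCLike.star_def, RCLike.conj_mul]

theorem re_rowInner_le (W V : σ → Matrix ι κ 𝕜) (m : ι) :
    RCLike.re (rowInner W V m) ≤ √(antennaPower W m) * √(antennaPower V m) := by
  simp only [rowInner, antennaPower, map_sum, ← Fintype.sum_prod_type']
  calc ∑ x : κ × σ, RCLike.re (star (W x.2 m x.1) * V x.2 m x.1)
      ≤ ∑ x : κ × σ, ‖W x.2 m x.1‖ * ‖V x.2 m x.1‖ := by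
        refine Finset.sum_le_sum fun x _ => (RCLike.re_le_norm _).trans_eq ?_
        rw [norm_mul, norm_star]
    _ ≤ _ := Real.sum_mul_le_sqrt_mul_sqrt _ _ _

variable [Fintype ι] [DecidableEq ι]

theorem re_sum_trace_conjTranspose_mul_diagonal_mul (W V : σ → Matrix ι κ 𝕜) (e : ι → ℝ) :
    RCLike.re (∑ q, trace ((W q)ᴴ * diagonal (fun m => (e m : 𝕜)) * V q)) =
      ∑ m, e m * RCLike.re (rowInner W V m) := by
  simp only [trace_conjTranspose_mul_diagonal_mul, rowInner, map_sum, RCLike.re_ofReal_mul,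
    Finset.mul_sum]
  rw [Finset.sum_comm]
  exact Finset.sum_congr rfl fun m _ => Finset.sum_comm

theorem sum_sqrt_antennaPower_le_of_sum_trace_eq {W V : σ → Matrix ι κ 𝕜}
    (h : ∑ q, trace ((W q)ᴴ * diagonal (fun m => (((√(antennaPower W m))⁻¹ : ℝ) : 𝕜)) * V q) =
      ∑ q, trace ((W q)ᴴ * diagonal (fun m => (((√(antennaPower W m))⁻¹ : ℝ) : 𝕜)) * W q)) :
    ∑ m, √(antennaPower W m) ≤ ∑ m, √(antennaPower V m) := by
  -- `≤ 1` rather than `= 1`: a zero row of `W` gets the junk weight `(√0)⁻¹ = 0`.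
  have hnorm : ∀ m, (√(antennaPower W m))⁻¹ * √(antennaPower W m) ≤ 1 := fun m =>
    inv_mul_le_one_of_le₀ le_rfl (Real.sqrt_nonneg _)
  calc ∑ m, √(antennaPower W m)
      = ∑ m, (√(antennaPower W m))⁻¹ * RCLike.re (rowInner W W m) := by
        simp only [rowInner_self, RCLike.ofReal_re, inv_mul_eq_div, Real.div_sqrt]
    _ = ∑ m, (√(antennaPower W m))⁻¹ * RCLike.re (rowInner W V m) := by
        rw [← re_sum_trace_conjTranspose_mul_diagonal_mul,
          ← re_sum_trace_conjTranspose_mul_diagonal_mul, h]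
    _ ≤ ∑ m, (√(antennaPower W m))⁻¹ * (√(antennaPower W m) * √(antennaPower V m)) := by
        gcongr with m
        exact re_rowInner_le W V m
    _ ≤ ∑ m, √(antennaPower V m) := by
        gcongr with m
        rw [← mul_assoc]
        exact mul_le_of_le_one_left (Real.sqrt_nonneg _) (hnorm m)

end Precoding

theorem stmt0_general (Q K M : ℕ)
    (H : Fin Q → Matrix (Fin K) (Fin M) ℂ)
    (B : Matrix (Fin K) (Fin K) ℂ)
    (p : Fin M → ℝ) (hp : ∀ m, 0 < p m)
    (Dp : Matrix (Fin M) (Fin M) ℂ)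
    (hDp : Dp = Matrix.diagonal (fun m => (Real.sqrt (p m) : ℂ)))
    (hinv : ∀ q, IsUnit (H q * Dp * (H q)ᴴ))
    (W : Fin Q → Matrix (Fin M) (Fin K) ℂ)
    (hW : ∀ q, W q = Dp * (H q)ᴴ * (H q * Dp * (H q)ᴴ)⁻¹ * B)
    (hfp : ∀ m, p m = ∑ k : Fin K, ∑ q : Fin Q, ‖(W q) m k‖ ^ 2) :
    (∀ q, H q * W q = B) ∧
      (∀ V : Fin Q → Matrix (Fin M) (Fin K) ℂ, (∀ q, H q * V q = B) →
        ∑ m : Fin M, Real.sqrt (p m) ≤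
          ∑ m : Fin M, Real.sqrt (∑ k : Fin K, ∑ q : Fin Q, ‖(V q) m k‖ ^ 2)) := by
  have hW' : ∀ q, W q = Dp * (H q)ᴴ * ((H q * Dp * (H q)ᴴ)⁻¹ * B) := fun q => by
    rw [hW q, Matrix.mul_assoc (Dp * (H q)ᴴ)]
  have hZF : ∀ q, H q * W q = B := fun q => by
    have h := mul_mul_nonsing_inv_mul_cancel (H q) (Dp * (H q)ᴴ) B
    rw [← Matrix.mul_assoc (H q) Dp] at h
    rw [hW q]
    exact h (hinv q)
  refine ⟨hZF, fun V hV => ?_⟩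
  have hPW : antennaPower W = p := funext fun m => (hfp m).symm
  have hDpH : Dpᴴ = Dp := by
    rw [hDp, diagonal_conjTranspose]
    simp [Pi.star_def, Complex.conj_ofReal]
  have hDpE : Dp * diagonal (fun m => (((√(p m))⁻¹ : ℝ) : ℂ)) = 1 := by
    rw [hDp, diagonal_mul_diagonal, ← diagonal_one]
    congr 1
    funext m
    rw [← Complex.ofReal_mul, mul_inv_cancel₀ (Real.sqrt_pos.mpr (hp m)).ne', Complex.ofReal_one]
  have htrace : ∀ q (C : Matrix (Fin M) (Fin K) ℂ), H q * C = B →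
      (W q)ᴴ * diagonal (fun m => (((√(p m))⁻¹ : ℝ) : ℂ)) * C =
        ((H q * Dp * (H q)ᴴ)⁻¹ * B)ᴴ * B := fun q C hC => by
    rw [hW' q]
    exact conjTranspose_mul_mul_eq_of_mul_eq hDpH hDpE _ hC
  have hmin := sum_sqrt_antennaPower_le_of_sum_trace_eq (W := W) (V := V)
  -- at `𝕜 = ℂ` the lemma's coercion is `RCLike.ofReal`, syntactically not `Complex.ofReal`
  rw [RCLike.ofReal_eq_complex_ofReal, hPW] at hmin
  exact hmin (Finset.sum_congr rfl fun q _ => by rw [htrace q _ (hV q), htrace q _ (hZF q)])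

/-- The precoder `W_q = D_p^{1/2} H_q^H (H_q D_p^{1/2} H_q^H)⁻¹ B`, where `p` solves the
fixed-point equations, satisfies the zero-forcing constraints and globally minimizes the
PA power objective `∑_m (∑_{k,q} |[V_q]_{m,k}|²)^{1/2}` among all zero-forcing precoders. -/
theorem stmt0 (Q K M : ℕ) (hQ : 0 < Q) (hK : 0 < K) (hM : 0 < M)
    (H : Fin Q → Matrix (Fin K) (Fin M) ℂ)
    (b : Fin K → ℝ) (hb : ∀ k, 0 < b k)
    (B : Matrix (Fin K) (Fin K) ℂ) (hB : B = Matrix.diagonal (fun k => (b k : ℂ)))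
    (p : Fin M → ℝ) (hp : ∀ m, 0 < p m)
    (Dp : Matrix (Fin M) (Fin M) ℂ)
    (hDp : Dp = Matrix.diagonal (fun m => (Real.sqrt (p m) : ℂ)))
    (hinv : ∀ q, IsUnit (H q * Dp * (H q)ᴴ))
    (W : Fin Q → Matrix (Fin M) (Fin K) ℂ)
    (hW : ∀ q, W q = Dp * (H q)ᴴ * (H q * Dp * (H q)ᴴ)⁻¹ * B)
    (hfp : ∀ m, p m = ∑ k : Fin K, ∑ q : Fin Q, ‖(W q) m k‖ ^ 2) :
    (∀ q, H q * W q = B) ∧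
      (∀ V : Fin Q → Matrix (Fin M) (Fin K) ℂ, (∀ q, H q * V q = B) →
        ∑ m : Fin M, Real.sqrt (p m) ≤
          ∑ m : Fin M, Real.sqrt (∑ k : Fin K, ∑ q : Fin Q, ‖(V q) m k‖ ^ 2)) :=
  stmt0_general Q K M H B p hp Dp hDp hinv W hW hfp
end

section
/- Let h ∈ ℂ^M be a nonzero vector, let c ∈ ℂ, and let m̂ be an index maximizing |h_m|. Define w* ∈ ℂ^M by w*_{m̂} = c h_{m̂}^* / |h_{m̂}|² and w*_m = 0 for m ≠ m̂. Then Σ_m h_m w*_m = c, Σ_m |w*_m| = |c| / max_m |h_m|, and every w ∈ ℂ^M with Σ_m h_m w_m = c satisfies Σ_m |w_m| ≥ |c| / max_m |h_m|. Hence in a narrowband single-user system without per-antenna power constraints, the precoder minimizing the PA power consumption allocates all power to an antenna with the largest channel gain. -/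
open BigOperators

/-! By the triangle inequality, `‖c‖ = ‖∑ h m * w m‖ ≤ (max_m ‖h m‖) * ∑ ‖w m‖` for every feasible
`w`, and `w*`, which equals `c / h m̂` at `m̂` and vanishes elsewhere, attains this bound. -/

theorem RCLike.mul_conj_div_norm_sq {𝕜 : Type*} [RCLike 𝕜] (c z : 𝕜) :
    c * starRingEnd 𝕜 z / ((‖z‖ ^ 2 : ℝ) : 𝕜) = c / z := by
  rw [div_eq_mul_inv c z, RCLike.inv_def, mul_div_assoc, div_eq_mul_inv, RCLike.ofReal_inv]

theorem Fintype.sum_norm_pi_single {ι E : Type*} [Fintype ι] [DecidableEq ι]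
    [SeminormedAddCommGroup E] (i : ι) (x : E) : ∑ j, ‖(Pi.single i x : ι → E) j‖ = ‖x‖ := by
  simp_rw [Pi.apply_single (fun _ => norm) (fun _ => norm_zero)]
  exact Fintype.sum_pi_single' i ‖x‖

theorem norm_sum_mul_le_mul_sum_norm {ι R : Type*} [SeminormedRing R] (s : Finset ι)
    (h w : ι → R) {B : ℝ} (hB : ∀ i ∈ s, ‖h i‖ ≤ B) :
    ‖∑ i ∈ s, h i * w i‖ ≤ B * ∑ i ∈ s, ‖w i‖ :=
  calc ‖∑ i ∈ s, h i * w i‖ ≤ ∑ i ∈ s, ‖h i‖ * ‖w i‖ :=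
        (norm_sum_le _ _).trans (Finset.sum_le_sum fun _ _ => norm_mul_le _ _)
    _ ≤ ∑ i ∈ s, B * ‖w i‖ :=
        Finset.sum_le_sum fun i hi => mul_le_mul_of_nonneg_right (hB i hi) (norm_nonneg _)
    _ = B * ∑ i ∈ s, ‖w i‖ := (Finset.mul_sum _ _ _).symm

theorem norm_div_le_sum_norm_of_sum_mul_eq {ι R : Type*} [Fintype ι] [SeminormedRing R]
    {h w : ι → R} {c : R} {B : ℝ} (hB : ∀ i, ‖h i‖ ≤ B) (hw : ∑ i, h i * w i = c) :
    ‖c‖ / B ≤ ∑ i, ‖w i‖ := by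
  rcases le_or_gt B 0 with hB0 | hB0
  · exact (div_nonpos_of_nonneg_of_nonpos (norm_nonneg c) hB0).trans
      (Finset.sum_nonneg fun i _ => norm_nonneg (w i))
  · rw [div_le_iff₀' hB0, ← hw]
    exact norm_sum_mul_le_mul_sum_norm _ h w fun i _ => hB i

/-- Narrowband single-user: the precoder putting all power on an antenna with the largest
channel gain satisfies the constraint, has PA objective `|c|/max_m |h_m|`, and every
feasible precoder has PA objective at least that value. -/
theorem stmt3 (M : ℕ) (h : Fin M → ℂ) (hh : h ≠ 0) (c : ℂ)
    (mhat : Fin M) (hmax : ∀ m, ‖h m‖ ≤ ‖h mhat‖)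
    (wstar : Fin M → ℂ)
    (hwstar : wstar = fun m =>
      if m = mhat then c * (starRingEnd ℂ) (h mhat) / (‖h mhat‖ ^ 2 : ℝ) else 0) :
    (∑ m : Fin M, h m * wstar m = c) ∧
      (∑ m : Fin M, ‖wstar m‖ = ‖c‖ / ‖h mhat‖) ∧
      (∀ w : Fin M → ℂ, ∑ m : Fin M, h m * w m = c →
        ‖c‖ / ‖h mhat‖ ≤ ∑ m : Fin M, ‖w m‖) := by
  have hmhat : h mhat ≠ 0 := by
    obtain ⟨m, hm⟩ := Function.ne_iff.mp hh
    exact norm_pos_iff.mp ((norm_pos_iff.mpr hm).trans_le (hmax m))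
  have hsingle : wstar = Pi.single mhat (c / h mhat) := by
    rw [hwstar]
    funext m
    rw [Pi.single_apply]
    congr 1
    exact RCLike.mul_conj_div_norm_sq c (h mhat)
  subst hsingle
  refine ⟨?_, ?_, fun w hw => norm_div_le_sum_norm_of_sum_mul_eq hmax hw⟩
  · exact (dotProduct_single h (c / h mhat) mhat).trans (mul_div_cancel₀ c hmhat)
  · rw [Fintype.sum_norm_pi_single, norm_div]
end

section
/- Let h ∈ ℂ^M be nonzero, let c ∈ ℂ with c ≠ 0, and suppose the maximum of |h_m| is attained at a unique index m̂, i.e., |h_m| < |h_{m̂}| for all m ≠ m̂. Then every minimizer w of Σ_m |w_m| over the set {w ∈ ℂ^M : Σ_m h_m w_m = c} satisfies w_m = 0 for all m ≠ m̂ and w_{m̂} = c / h_{m̂}; i.e., the optimal narrowband single-user precoder uses only the antenna with the strongest channel gain and is unique. -/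
/-!
The single-antenna precoder `Pi.single m̂ (c / h m̂)` is feasible with cost `‖c‖ / ‖h m̂‖`, so a
minimizer `w` satisfies `‖h m̂‖ ∑ ‖w m‖ ≤ ‖c‖ ≤ ∑ ‖h m‖ ‖w m‖`. Hence
`∑ (‖h m̂‖ - ‖h m‖) ‖w m‖ ≤ 0`, a sum of nonnegative terms whose weights are positive off `m̂`,
so `w` vanishes off `m̂` and the constraint fixes `w m̂`.
-/

open Finset

variable {ι : Type*}

lemma apply_ne_zero_of_forall_norm_lt {E : Type*} [NormedAddCommGroup E] {h : ι → E}
    (hh : h ≠ 0) {i : ι} (hmax : ∀ j, j ≠ i → ‖h j‖ < ‖h i‖) : h i ≠ 0 := by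
  obtain ⟨j, hj⟩ := Function.ne_iff.1 hh
  intro hi
  rcases eq_or_ne j i with rfl | hji
  · exact hj hi
  · exact (norm_nonneg _).not_gt (by simpa [hi] using hmax j hji)

variable [Fintype ι]

lemma eq_zero_of_mul_sum_norm_le_sum_norm_mul {E F : Type*} [NormedAddCommGroup E]
    [NormedAddCommGroup F] {h : ι → E} {w : ι → F} {i : ι}
    (hmax : ∀ j, j ≠ i → ‖h j‖ < ‖h i‖) (hle : ‖h i‖ * ∑ j, ‖w j‖ ≤ ∑ j, ‖h j‖ * ‖w j‖) :
    ∀ j, j ≠ i → w j = 0 := by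
  have hgap_nonneg : ∀ j, 0 ≤ (‖h i‖ - ‖h j‖) * ‖w j‖ := fun j ↦ by
    refine mul_nonneg ?_ (norm_nonneg _)
    rcases eq_or_ne j i with rfl | hji
    · exact (sub_self _).ge
    · exact (sub_pos.2 (hmax j hji)).le
  have hgap_sum : ∑ j, (‖h i‖ - ‖h j‖) * ‖w j‖ = 0 := by
    refine le_antisymm ?_ (sum_nonneg fun j _ ↦ hgap_nonneg j)
    simp only [sub_mul, sum_sub_distrib, ← mul_sum]
    linarith
  intro j hji
  have hgap := (sum_eq_zero_iff_of_nonneg fun j _ ↦ hgap_nonneg j).1 hgap_sum j (mem_univ j)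
  rw [mul_eq_zero, sub_eq_zero] at hgap
  exact norm_eq_zero.1 (hgap.resolve_left (hmax j hji).ne')

section NormedField

variable {𝕜 : Type*} [NormedField 𝕜] [DecidableEq ι]

lemma sum_mul_pi_single_div (h : ι → 𝕜) {i : ι} (hi : h i ≠ 0) (c : 𝕜) :
    ∑ j, h j * (Pi.single i (c / h i) : ι → 𝕜) j = c := by
  rw [Fintype.sum_eq_single i fun j hji ↦ by simp [hji]]
  simp [mul_div_cancel₀ _ hi]

lemma sum_norm_pi_single (i : ι) (a : 𝕜) : ∑ j, ‖(Pi.single i a : ι → 𝕜) j‖ = ‖a‖ := by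
  rw [Fintype.sum_eq_single i fun j hji ↦ by simp [hji]]
  simp

lemma mul_sum_norm_le_of_forall_sum_norm_le {h w : ι → 𝕜} {c : 𝕜} {i : ι} (hi : h i ≠ 0)
    (hmin : ∀ v : ι → 𝕜, ∑ j, h j * v j = c → ∑ j, ‖w j‖ ≤ ∑ j, ‖v j‖) :
    ‖h i‖ * ∑ j, ‖w j‖ ≤ ‖c‖ := by
  have hsingle := hmin _ (sum_mul_pi_single_div h hi c)
  rw [sum_norm_pi_single, norm_div, le_div_iff₀ (norm_pos_iff.2 hi)] at hsingle
  linarith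

end NormedField

theorem stmt4_general (M : ℕ) (h : Fin M → ℂ) (hh : h ≠ 0) (c : ℂ)
    (mhat : Fin M) (hmax : ∀ m, m ≠ mhat → ‖h m‖ < ‖h mhat‖)
    (w : Fin M → ℂ)
    (hfeas : ∑ m : Fin M, h m * w m = c)
    (hmin : ∀ v : Fin M → ℂ, ∑ m : Fin M, h m * v m = c →
      ∑ m : Fin M, ‖w m‖ ≤ ∑ m : Fin M, ‖v m‖) :
    (∀ m, m ≠ mhat → w m = 0) ∧ w mhat = c / h mhat := by
  have hmhat := apply_ne_zero_of_forall_norm_lt hh hmax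
  have hzero : ∀ m, m ≠ mhat → w m = 0 := by
    refine eq_zero_of_mul_sum_norm_le_sum_norm_mul hmax ?_
    calc ‖h mhat‖ * ∑ m, ‖w m‖ ≤ ‖c‖ := mul_sum_norm_le_of_forall_sum_norm_le hmhat hmin
      _ = ‖∑ m, h m * w m‖ := by rw [hfeas]
      _ ≤ ∑ m, ‖h m‖ * ‖w m‖ := by simpa only [norm_mul] using norm_sum_le univ fun m ↦ h m * w m
  refine ⟨hzero, eq_div_of_mul_eq hmhat ?_⟩
  rwa [Fintype.sum_eq_single mhat fun m hm ↦ by rw [hzero m hm, mul_zero], mul_comm] at hfeas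

/-- If the maximal channel gain is attained at a unique antenna, every minimizer of the
PA objective subject to the zero-forcing constraint uses only that antenna, with
coefficient `c / h_mhat`. -/
theorem stmt4 (M : ℕ) (h : Fin M → ℂ) (hh : h ≠ 0) (c : ℂ) (hc : c ≠ 0)
    (mhat : Fin M) (hmax : ∀ m, m ≠ mhat → ‖h m‖ < ‖h mhat‖)
    (w : Fin M → ℂ)
    (hfeas : ∑ m : Fin M, h m * w m = c)
    (hmin : ∀ v : Fin M → ℂ, ∑ m : Fin M, h m * v m = c →
      ∑ m : Fin M, ‖w m‖ ≤ ∑ m : Fin M, ‖v m‖) :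
    (∀ m, m ≠ mhat → w m = 0) ∧ w mhat = c / h mhat :=
  stmt4_general M h hh c mhat hmax w hfeas hmin
end

section
/- Let T > 0 and p > 0 be real numbers and K a nonnegative integer. Define M̂ = ⌈(K + (K² + 4T/p)^{1/2})/2⌉. Then M̂ > K, T/(M̂(M̂−K)) ≤ p, and every integer n with K < n < M̂ satisfies T/(n(n−K)) > p. In other words, M̂ is the minimal integer number of active antennas for which the asymptotic per-antenna transmit power T/(n(n−K)) does not exceed the per-antenna power limit p. -/
/-!
`M̂` is the ceiling of the positive root `x` of `y (y - K) = T / p`. For `y ≥ 0` we have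
`y (y - K) - x (x - K) = (y - x)(y + x - K)` with `x > K`, so on `y ≥ 0` the power
`T / (y (y - K))` is at most `p` exactly when `y ≥ x`; the least integer `≥ x` is `⌈x⌉`.
-/

/-- The larger root of `y ^ 2 - K y - c`. -/
noncomputable def posRoot (K c : ℝ) : ℝ := (K + √(K ^ 2 + 4 * c)) / 2

section posRoot

variable {K c y : ℝ}

theorem posRoot_mul_sub_self (hc : 0 ≤ c) : posRoot K c * (posRoot K c - K) = c := by
  have hsq : √(K ^ 2 + 4 * c) ^ 2 = K ^ 2 + 4 * c := Real.sq_sqrt (by positivity)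
  unfold posRoot
  linear_combination hsq / 4

theorem lt_posRoot (hc : 0 < c) : K < posRoot K c := by
  have : K < √(K ^ 2 + 4 * c) := Real.lt_sqrt_of_sq_lt (by linarith)
  unfold posRoot
  linarith

theorem le_mul_sub_iff_posRoot_le (hc : 0 < c) (hy : 0 ≤ y) :
    c ≤ y * (y - K) ↔ posRoot K c ≤ y := by
  set x := posRoot K c
  have hx : x * (x - K) = c := posRoot_mul_sub_self hc.le
  have hxK : K < x := lt_posRoot hc
  have hfactor : y * (y - K) - c = (y - x) * (y + x - K) := by rw [← hx]; ring
  have hpos : 0 < y + x - K := by linarith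
  constructor
  · intro h
    by_contra! hyx
    nlinarith [mul_neg_of_neg_of_pos (sub_neg.2 hyx) hpos]
  · intro h
    nlinarith [mul_nonneg (sub_nonneg.2 h) hpos.le]

end posRoot

theorem div_mul_sub_le_iff_posRoot_le {T p K n : ℝ} (hT : 0 < T) (hp : 0 < p) (hK : 0 ≤ K)
    (hKn : K < n) : T / (n * (n - K)) ≤ p ↔ posRoot K (T / p) ≤ n := by
  have hn : 0 < n * (n - K) := mul_pos (by linarith) (sub_pos.2 hKn)
  rw [div_le_comm₀ hn hp, le_mul_sub_iff_posRoot_le (div_pos hT hp) (by linarith)]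

/-- `M̂ = ⌈(K + √(K² + 4T/p))/2⌉` is the minimal integer number of active antennas for
which the asymptotic per-antenna transmit power `T/(n(n−K))` does not exceed `p`. -/
theorem stmt8 (T p : ℝ) (hT : 0 < T) (hp : 0 < p) (K : ℕ)
    (Mhat : ℕ) (hMhat : Mhat = ⌈((K : ℝ) + Real.sqrt ((K : ℝ) ^ 2 + 4 * T / p)) / 2⌉₊) :
    K < Mhat ∧
      T / ((Mhat : ℝ) * ((Mhat : ℝ) - (K : ℝ))) ≤ p ∧
      ∀ n : ℕ, K < n → n < Mhat → p < T / ((n : ℝ) * ((n : ℝ) - (K : ℝ))) := by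
  rw [mul_div_assoc] at hMhat
  change Mhat = ⌈posRoot K (T / p)⌉₊ at hMhat
  have hroot_le : posRoot K (T / p) ≤ Mhat := hMhat ▸ Nat.le_ceil _
  have hKM : (K : ℝ) < Mhat := (lt_posRoot (div_pos hT hp)).trans_le hroot_le
  refine ⟨mod_cast hKM, (div_mul_sub_le_iff_posRoot_le hT hp K.cast_nonneg hKM).2 hroot_le, ?_⟩
  intro n hKn hnM
  have hn_lt : (n : ℝ) < posRoot K (T / p) := Nat.lt_ceil.1 (hMhat ▸ hnM)
  rw [← not_le, div_mul_sub_le_iff_posRoot_le hT hp K.cast_nonneg (mod_cast hKn)]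
  exact hn_lt.not_ge
end

section
/- Let t > 0, C > 0, K > 0 be real numbers and p_fix ∈ ℝ. The function f(x) = t·(x/(x−K))^{1/2} + p_fix + C·x is strictly convex on the open interval (K, ∞); indeed, for every x > K its second derivative equals (tK/4)·(4x−K)/(x^{3/2}(x−K)^{5/2}), which is strictly positive. -/
/-! On `(K, ∞)` one has `√(x / (x - K)) = x ^ (1/2) * (x - K) ^ (-1/2)`, so both derivatives
of `f` come from the product rule for `x ^ a * (x - K) ^ b`:
`f' x = -(tK/2) x^(-1/2) (x-K)^(-3/2) + C` and `f'' x = (tK/4) (4x - K) / (x^(3/2) (x-K)^(5/2))`,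
which is positive because `4x - K > 3K > 0`. Strict convexity then follows from the
second-derivative test. -/

open Real Set Filter Topology

lemma hasDerivAt_rpow_mul_sub_rpow (a b : ℝ) {K x : ℝ} (hx : 0 < x) (hxK : K < x) :
    HasDerivAt (fun y => y ^ a * (y - K) ^ b)
      (a * x ^ (a - 1) * (x - K) ^ b + x ^ a * (b * (x - K) ^ (b - 1))) x := by
  have hpow := hasDerivAt_rpow_const (p := a) (Or.inl hx.ne')
  have hpow_sub :=
    ((hasDerivAt_id x).sub_const K).rpow_const (p := b) (Or.inl (sub_pos.2 hxK).ne')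
  simpa only [id, one_mul] using hpow.fun_mul hpow_sub

lemma sqrt_div_sub_eq_rpow {K y : ℝ} (hy : 0 ≤ y) (hyK : K ≤ y) :
    √(y / (y - K)) = y ^ (1 / 2 : ℝ) * (y - K) ^ (-(1 / 2) : ℝ) := by
  rw [sqrt_eq_rpow, div_rpow hy (sub_nonneg.2 hyK), rpow_neg (sub_nonneg.2 hyK), div_eq_mul_inv]

noncomputable def sqrtRatioDeriv (K y : ℝ) : ℝ :=
  -(K / 2) * (y ^ (-(1 / 2) : ℝ) * (y - K) ^ (-(3 / 2) : ℝ))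

lemma hasDerivAt_sqrt_div_sub {K x : ℝ} (hx : 0 < x) (hxK : K < x) :
    HasDerivAt (fun y => √(y / (y - K))) (sqrtRatioDeriv K x) x := by
  have heq : (fun y => √(y / (y - K))) =ᶠ[𝓝 x]
      fun y => y ^ (1 / 2 : ℝ) * (y - K) ^ (-(1 / 2) : ℝ) := by
    filter_upwards [Ioi_mem_nhds hx, Ioi_mem_nhds hxK] with y hy hyK
    exact sqrt_div_sub_eq_rpow hy.le hyK.le
  refine ((hasDerivAt_rpow_mul_sub_rpow (1 / 2) (-(1 / 2)) hx hxK).congr_of_eventuallyEq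
    heq).congr_deriv ?_
  have hx_pow : x ^ (1 / 2 : ℝ) = x * x ^ (-(1 / 2) : ℝ) := by
    rw [← rpow_one_add' hx.le (by norm_num)]; norm_num
  have hxK_pow : (x - K) ^ (-(1 / 2) : ℝ) = (x - K) * (x - K) ^ (-(3 / 2) : ℝ) := by
    rw [← rpow_one_add' (sub_pos.2 hxK).le (by norm_num)]; norm_num
  rw [sqrtRatioDeriv, hx_pow, hxK_pow, show (1 / 2 - 1 : ℝ) = -(1 / 2) by norm_num,
    show (-(1 / 2) - 1 : ℝ) = -(3 / 2) by norm_num]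
  ring

lemma hasDerivAt_sqrtRatioDeriv {K x : ℝ} (hx : 0 < x) (hxK : K < x) :
    HasDerivAt (sqrtRatioDeriv K)
      (K / 4 * (4 * x - K) / (x ^ ((3 : ℝ) / 2) * (x - K) ^ ((5 : ℝ) / 2))) x := by
  refine ((hasDerivAt_rpow_mul_sub_rpow (-(1 / 2)) (-(3 / 2)) hx hxK).const_mul
    (-(K / 2))).congr_deriv ?_
  have hx_pow : x ^ (-(1 / 2) : ℝ) = x * (x ^ ((3 : ℝ) / 2))⁻¹ := by
    rw [← rpow_neg hx.le, ← rpow_one_add' hx.le (by norm_num)]; norm_num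
  have hxK_pow : (x - K) ^ (-(3 / 2) : ℝ) = (x - K) * ((x - K) ^ ((5 : ℝ) / 2))⁻¹ := by
    rw [← rpow_neg (sub_pos.2 hxK).le, ← rpow_one_add' (sub_pos.2 hxK).le (by norm_num)]
    norm_num
  rw [show (-(1 / 2) - 1 : ℝ) = -(3 / 2) by norm_num,
    show (-(3 / 2) - 1 : ℝ) = -(5 / 2) by norm_num, hx_pow, hxK_pow,
    rpow_neg hx.le, rpow_neg (sub_pos.2 hxK).le]
  field_simp
  ring

theorem stmt9_general (t C K pfix : ℝ) (ht : 0 < t) (hK : 0 < K)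
    (f : ℝ → ℝ) (hf : f = fun x => t * Real.sqrt (x / (x - K)) + pfix + C * x) :
    StrictConvexOn ℝ (Set.Ioi K) f ∧
      ∀ x : ℝ, K < x →
        iteratedDeriv 2 f x =
            t * K / 4 * (4 * x - K) / (x ^ ((3 : ℝ) / 2) * (x - K) ^ ((5 : ℝ) / 2)) ∧
          0 < t * K / 4 * (4 * x - K) / (x ^ ((3 : ℝ) / 2) * (x - K) ^ ((5 : ℝ) / 2)) := by
  have hf' : ∀ x ∈ Ioi K, HasDerivAt f (t * sqrtRatioDeriv K x + C) x := fun x hx => by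
    subst hf
    simpa using (((hasDerivAt_sqrt_div_sub (hK.trans hx) hx).const_mul t).add_const pfix).fun_add
      ((hasDerivAt_id x).const_mul C)
  have hf'' : ∀ x ∈ Ioi K, deriv^[2] f x =
      t * K / 4 * (4 * x - K) / (x ^ ((3 : ℝ) / 2) * (x - K) ^ ((5 : ℝ) / 2)) := fun x hx => by
    have hderiv : deriv f =ᶠ[𝓝 x] fun y => t * sqrtRatioDeriv K y + C :=
      eventually_of_mem (Ioi_mem_nhds hx) fun y hy => (hf' y hy).deriv
    rw [Function.iterate_succ_apply', Function.iterate_one, hderiv.deriv_eq,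
      (((hasDerivAt_sqrtRatioDeriv (hK.trans hx) hx).const_mul t).add_const C).deriv]
    ring
  have hpos : ∀ x ∈ Ioi K,
      0 < t * K / 4 * (4 * x - K) / (x ^ ((3 : ℝ) / 2) * (x - K) ^ ((5 : ℝ) / 2)) := by
    intro x hx
    have hxK : 0 < x - K := sub_pos.2 hx
    have h4xK : 0 < 4 * x - K := by linarith [mem_Ioi.1 hx]
    have hx0 : 0 < x := hK.trans hx
    positivity
  refine ⟨strictConvexOn_of_deriv2_pos' (convex_Ioi K)
    (fun x hx => (hf' x hx).continuousAt.continuousWithinAt) fun x hx => hf'' x hx ▸ hpos x hx,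
    fun x hx => ⟨?_, hpos x hx⟩⟩
  rw [iteratedDeriv_eq_iterate]
  exact hf'' x hx

/-- The asymptotic BS power consumption `f(x) = t√(x/(x−K)) + p_fix + Cx` is strictly
convex on `(K, ∞)`, and its second derivative at every `x > K` equals
`(tK/4)(4x−K)/(x^{3/2}(x−K)^{5/2})`, which is strictly positive. -/
theorem stmt9 (t C K pfix : ℝ) (ht : 0 < t) (hC : 0 < C) (hK : 0 < K)
    (f : ℝ → ℝ) (hf : f = fun x => t * Real.sqrt (x / (x - K)) + pfix + C * x) :
    StrictConvexOn ℝ (Set.Ioi K) f ∧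
      ∀ x : ℝ, K < x →
        iteratedDeriv 2 f x =
            t * K / 4 * (4 * x - K) / (x ^ ((3 : ℝ) / 2) * (x - K) ^ ((5 : ℝ) / 2)) ∧
          0 < t * K / 4 * (4 * x - K) / (x ^ ((3 : ℝ) / 2) * (x - K) ^ ((5 : ℝ) / 2)) :=
  stmt9_general t C K pfix ht hK f hf
end
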